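/- Let G be a connected labeled digraph over A and ≡ any group-preserving equivalence relation on its vertices. Then ≡ is contained in the Stallings equivalence ≡_S; consequently, ≡_S is the greatest group-preserving equivalence relation of G. -/

import Mathlib

open List

section Prelude

variable {A V : Type*}

structure LDigraph (V A : Type*) where
  E : Set (V × A × V)

namespace LDigraph

inductive Step (G : LDigraph V A) : V → V → FreeGroup A → Prop
  | fwd {x a y} : (x, a, y) ∈ G.E → Step G x y (FreeGroup.of a)
  | bwd {x a y} : (x, a, y) ∈ G.E → Step G y x (FreeGroup.of a)⁻¹

inductive PathLabel (G : LDigraph V A) : V → V → FreeGroup A → Prop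
  | nil (x) : PathLabel G x x 1
  | cons {x y z g h} : G.Step x y g → PathLabel G y z h → PathLabel G x z (g * h)

inductive PosPath (G : LDigraph V A) : V → V → List A → Prop
  | nil (x) : PosPath G x x []
  | cons {x a y z w} : (x, a, y) ∈ G.E → PosPath G y z w → PosPath G x z (a :: w)

def loopLabels (G : LDigraph V A) (x : V) : Set (FreeGroup A) :=
  {g | G.PathLabel x x g}

def Connected (G : LDigraph V A) : Prop :=
  ∀ x y : V, ∃ g, G.PathLabel x y g

def quot (G : LDigraph V A) (r : Setoid V) : LDigraph (Quotient r) A :=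
  ⟨{e | ∃ x a y, (x, a, y) ∈ G.E ∧ e = (Quotient.mk r x, a, Quotient.mk r y)}⟩

def GroupPreserving (G : LDigraph V A) (r : Setoid V) : Prop :=
  ∀ x : V, G.loopLabels x = (G.quot r).loopLabels (Quotient.mk r x)

end LDigraph

/-- The image of a word in the free group. -/
def wordToFG (w : List A) : FreeGroup A := (w.map FreeGroup.of).prod

def FactorClosed (L : Set (List A)) : Prop := ∀ w ∈ L, ∀ u : List A, u <:+: w → u ∈ L

def Recurrent (L : Set (List A)) : Prop :=
  FactorClosed L ∧ ∀ u ∈ L, ∀ v ∈ L, ∃ w : List A, w ≠ [] ∧ u ++ w ++ v ∈ L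

def UniformlyRecurrent (L : Set (List A)) : Prop :=
  FactorClosed L ∧ ∀ u ∈ L, ∃ N : ℕ, ∀ w ∈ L, N ≤ w.length → u <:+: w

/-- The Rauzy graph `G_{m,k}`: vertices are the words of `L` of length `m`, and every
word `x ∈ L` of length `m+1` gives an edge from `init x` to `tail x` labeled `x(k)`. -/
def rauzy (L : Set (List A)) (m k : ℕ) : LDigraph (List A) A :=
  ⟨{e | ∃ x a, x ∈ L ∧ x.length = m + 1 ∧ x[k]? = some a ∧ e = (x.dropLast, a, x.tail)}⟩

/-- The extension graph `E(w)`, a bipartite graph on two copies of `A`. -/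
def extGraph (L : Set (List A)) (w : List A) : SimpleGraph (A ⊕ A) where
  Adj x y := ∃ a b, a :: (w ++ [b]) ∈ L ∧
    ((x = Sum.inl a ∧ y = Sum.inr b) ∨ (x = Sum.inr b ∧ y = Sum.inl a))
  symm := ⟨by rintro x y ⟨a, b, h, hc⟩; exact ⟨a, b, h, by tauto⟩⟩
  loopless := ⟨by
    rintro x ⟨a, b, h, ⟨h1, h2⟩ | ⟨h1, h2⟩⟩ <;> rw [h1] at h2 <;> exact absurd h2 (by simp)⟩

/-- The set of genuine vertices of the extension graph of `w`. -/
def extVerts (L : Set (List A)) (w : List A) : Set (A ⊕ A) :=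
  Sum.elim (fun a => a :: w ∈ L) (fun b => w ++ [b] ∈ L)

/-- The extension graph of `w` is connected (all genuine vertices are mutually reachable). -/
def ExtConnected (L : Set (List A)) (w : List A) : Prop :=
  ∀ x ∈ extVerts L w, ∀ y ∈ extVerts L w, (extGraph L w).Reachable x y

/-- The extension graph of order `(d,d)` of the word `y`. -/
def extGraphK (L : Set (List A)) (d : ℕ) (y : List A) : SimpleGraph (List A ⊕ List A) where
  Adj p q := ∃ u v : List A, u.length = d ∧ v.length = d ∧ u ++ y ++ v ∈ L ∧
    ((p = Sum.inl u ∧ q = Sum.inr v) ∨ (p = Sum.inr v ∧ q = Sum.inl u))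
  symm := ⟨by rintro p q ⟨u, v, h1, h2, h3, hc⟩; exact ⟨u, v, h1, h2, h3, by tauto⟩⟩
  loopless := ⟨by
    rintro p ⟨u, v, _, _, _, ⟨h1, h2⟩ | ⟨h1, h2⟩⟩ <;> rw [h1] at h2 <;> exact absurd h2 (by simp)⟩

/-- A language is suffix-connected if for every nonempty word `w ∈ L` there exists a depth
`1 ≤ d ≤ |w|+1` such that the natural embedding of the left extensions of `w` in the
extension graph `E_{d,d}(tail^{d-1} w)` lies in a single connected component. -/
def SuffixConnected (L : Set (List A)) : Prop :=
  ∀ w ∈ L, w ≠ [] → ∃ d : ℕ, 1 ≤ d ∧ d ≤ w.length + 1 ∧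
    ∀ a b : A, a :: w ∈ L → b :: w ∈ L →
      (extGraphK L d (w.drop (d - 1))).Reachable
        (Sum.inl (a :: w.take (d - 1))) (Sum.inl (b :: w.take (d - 1)))

open Classical in
/-- The number of occurrences of `u` in `w`. -/
noncomputable def occCount (u w : List A) : ℕ :=
  (List.range (w.length + 1)).countP fun i => decide (u <+: w.drop i)

/-- The return set `R_{u,v}`. -/
noncomputable def ReturnSet (L : Set (List A)) (u v : List A) : Set (List A) :=
  {r | r ∈ L ∧ u ++ r ++ v ∈ L ∧ (u ++ v) <+: (u ++ r ++ v) ∧ (u ++ v) <:+ (u ++ r ++ v) ∧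
    occCount (u ++ v) (u ++ r ++ v) = 2}

end Prelude


/-! If `x ≡ y`, pick any path from `x` to `y`, with label `g`. In `G/≡` it becomes a loop at
`x/≡`, so group preservation yields a loop at `x` in `G` with the same label `g`. Reading that
loop backwards and then following the path gives a path from `x` to `y` labeled `g⁻¹ g = 1`. -/

namespace LDigraph

variable {V A : Type*} {G : LDigraph V A}

theorem PathLabel.trans {x y z : V} {g h : FreeGroup A} (p : G.PathLabel x y g)
    (q : G.PathLabel y z h) : G.PathLabel x z (g * h) := by
  induction p with
  | nil => rwa [one_mul]
  | cons s _ ih => rw [mul_assoc]; exact .cons s (ih q)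

theorem Step.symm {x y : V} {g : FreeGroup A} (s : G.Step x y g) : G.Step y x g⁻¹ := by
  cases s with
  | fwd h => exact .bwd h
  | bwd h => rw [inv_inv]; exact .fwd h

theorem PathLabel.symm {x y : V} {g : FreeGroup A} (p : G.PathLabel x y g) :
    G.PathLabel y x g⁻¹ := by
  induction p with
  | nil => rw [inv_one]; exact .nil _
  | cons s _ ih =>
      rw [mul_inv_rev]
      simpa only [mul_one] using ih.trans (.cons s.symm (.nil _))

theorem PathLabel.quot {x y : V} {g : FreeGroup A} (r : Setoid V) (p : G.PathLabel x y g) :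
    (G.quot r).PathLabel (Quotient.mk r x) (Quotient.mk r y) g := by
  induction p with
  | nil => exact .nil _
  | cons s _ ih =>
      cases s with
      | fwd h => exact .cons (.fwd ⟨_, _, _, h, rfl⟩) ih
      | bwd h => exact .cons (.bwd ⟨_, _, _, h, rfl⟩) ih

theorem GroupPreserving.pathLabel_self_of_rel {r : Setoid V} (hr : G.GroupPreserving r) {x y : V}
    {g : FreeGroup A} (hxy : r.r x y) (p : G.PathLabel x y g) : G.PathLabel x x g := by
  have hq : g ∈ (G.quot r).loopLabels (Quotient.mk r x) := by
    have := p.quot r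
    rwa [← Quotient.sound hxy] at this
  rwa [← hr x] at hq

end LDigraph

/-- Any group-preserving equivalence of a connected labeled digraph is contained in the
Stallings equivalence (the relation of being joined by a trivially-labeled path); hence the
Stallings equivalence is the greatest group-preserving equivalence. -/
theorem groupPreserving_le_stallings {V A : Type*} (G : LDigraph V A) (hG : G.Connected)
    (r : Setoid V) (h : G.GroupPreserving r) :
    ∀ x y : V, r.r x y → G.PathLabel x y 1 := by
  intro x y hxy
  obtain ⟨g, p⟩ := hG x y
  have loop : G.PathLabel x x g := h.pathLabel_self_of_rel hxy p
  simpa only [inv_mul_cancel] using loop.symm.trans p
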